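/- Fix an integer n ≥ 1. As M → ∞, the quantity Σ_{k=1}^M n k / ((n+k)(n+k-1)) - n log M converges to n(ρ - H_n) - (n-1), where ρ is the Euler–Mascheroni constant and H_n is the n-th harmonic number. -/

import Mathlib

open Filter Finset Real

/- Partial fractions give `n k / ((n+k)(n+k-1)) = n/(n+k) - n(n-1) (1/(n+k-1) - 1/(n+k))`: the
first part sums to `n (H_{n+M} - H_n)` and the second telescopes to `(n-1)(1 - n/(n+M))`. The
asymptotics then come from `H_m - log m → γ` and `log (M+n) - log M → 0`. -/

theorem sum_Icc_mul_div_eq (n : ℕ) (hn : 1 ≤ n) (M : ℕ) :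
    ∑ k ∈ Icc 1 M, (n * k : ℝ) / ((n + k) * (n + k - 1))
      = n * ((harmonic (M + n) : ℝ) - harmonic n) - (n - 1) * (1 - n / (n + M)) := by
  induction M with
  | zero => simp [show (n : ℝ) ≠ 0 by positivity]
  | succ M ih =>
    rw [sum_Icc_succ_top (by omega), ih, show M + 1 + n = (M + n) + 1 by ring, harmonic_succ]
    push_cast
    have h₁ : (n : ℝ) + M ≠ 0 := by positivity
    have h₂ : (n : ℝ) + (M + 1) ≠ 0 := by positivity
    rw [show (M : ℝ) + n + 1 = n + (M + 1) by ring, show (n : ℝ) + (M + 1) - 1 = n + M by ring]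
    field_simp
    ring

theorem tendsto_harmonic_add_sub_log (n : ℕ) :
    Tendsto (fun M : ℕ => (harmonic (M + n) : ℝ) - log M) atTop (nhds eulerMascheroniConstant) := by
  have h := (tendsto_harmonic_sub_log.comp (tendsto_add_atTop_nat n)).add
    ((tendsto_log_comp_add_sub_log n).comp tendsto_natCast_atTop_atTop)
  rw [add_zero] at h
  refine h.congr fun M => ?_
  simp only [Function.comp_apply, Nat.cast_add]
  ring

/-- For fixed `n ≥ 1`, `Σ_{k=1}^M n k / ((n+k)(n+k-1)) - n log M` converges, as `M → ∞`,
to `n(ρ - H_n) - (n-1)` where `ρ` is the Euler–Mascheroni constant and `H_n` the `n`-th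
harmonic number. -/
theorem sum_singleton_asymptotic (n : ℕ) (hn : 1 ≤ n) :
    Tendsto
      (fun M : ℕ =>
        (∑ k ∈ Finset.Icc 1 M, (n * k : ℝ) / ((n + k) * (n + k - 1))) - n * Real.log M)
      atTop
      (nhds (n * (Real.eulerMascheroniConstant - (harmonic n : ℝ)) - (n - 1))) := by
  have hratio : Tendsto (fun M : ℕ => (n : ℝ) / (n + M)) atTop (nhds 0) :=
    tendsto_const_nhds.div_atTop (tendsto_atTop_add_const_left atTop _ tendsto_natCast_atTop_atTop)
  have h := (((tendsto_harmonic_add_sub_log n).sub_const (harmonic n : ℝ)).const_mul (n : ℝ)).sub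
    (((tendsto_const_nhds (x := (1 : ℝ))).sub hratio).const_mul ((n : ℝ) - 1))
  rw [sub_zero, mul_one] at h
  refine h.congr fun M => ?_
  rw [sum_Icc_mul_div_eq n hn M]
  ring
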